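/- With B and ψ the relativised collapsing hierarchy: if α = ψ(γ) where γ ∈ B(γ), then for every ordinal η, α ∈ B(η) if and only if γ ∈ B(η) and γ < η. -/

import Mathlib

open Ordinal

universe u v

set_option linter.deprecated false in
/-- `derivBFamily` as it was defined in Mathlib (Dec 2024), since removed. -/
noncomputable def derivBFamily (o : Ordinal.{u})
    (f : ∀ b < o, Ordinal.{max u v} → Ordinal.{max u v}) :
    Ordinal.{max u v} → Ordinal.{max u v} :=
  derivFamily (familyOfBFamily o f)

/-- The binary Veblen function: `veblen 0 β = ω ^ β`, and for `α > 0`,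
`veblen α` enumerates the common fixed points of `veblen γ` for `γ < α`. -/
noncomputable def veblen : Ordinal → Ordinal → Ordinal :=
  WellFounded.fix Ordinal.lt_wf
    (fun α ih => if α = 0 then fun β => omega0 ^ β
      else derivBFamily.{0,0} α (fun ξ h => ih ξ h))

/-- The set of strongly critical ordinals. -/
def StronglyCritical (γ : Ordinal) : Prop := _root_.veblen γ 0 = γ

/-- `Gamma β` is the `β`-th strongly critical ordinal. -/
noncomputable def Gamma : Ordinal → Ordinal :=
  enumOrd {γ | StronglyCritical γ}

/-- The least uncountable cardinal (as an ordinal) greater than `θ`. -/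
noncomputable def OmegaB (θ : Ordinal) : Ordinal :=
  sInf {o | θ < o ∧ o.card.ord = o ∧ Cardinal.aleph0 < o.card}

/-- Closure of `{0, Ω} ∪ {Γ_β : β ≤ θ}` under `+`, `veblen` and the
given partial collapsing function `f` on arguments below `α`. -/
def closB (θ α : Ordinal) (f : ∀ ξ, ξ < α → Ordinal) : Set Ordinal :=
  ⋂₀ {S : Set Ordinal |
      0 ∈ S ∧ OmegaB θ ∈ S ∧ (∀ β ≤ θ, Gamma β ∈ S) ∧
      (∀ x ∈ S, ∀ y ∈ S, x + y ∈ S) ∧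
      (∀ x ∈ S, ∀ y ∈ S, _root_.veblen x y ∈ S) ∧
      (∀ ξ (h : ξ < α), ξ ∈ S → f ξ h ∈ S)}

/-- The relativised collapsing function `ψ_θ`. -/
noncomputable def psiB (θ : Ordinal) : Ordinal → Ordinal :=
  WellFounded.fix Ordinal.lt_wf
    (fun α ih => sInf {β | β ∉ closB θ α (fun ξ h => ih ξ h)})

/-- The relativised collapsing hierarchy `B_θ(α)`. -/
def BB (θ α : Ordinal) : Set Ordinal :=
  closB θ α (fun ξ _ => psiB θ ξ)

/-- The least strongly critical ordinal strictly above `δ`. -/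
noncomputable def gammaSucc (δ : Ordinal) : Ordinal :=
  sInf {γ | δ < γ ∧ StronglyCritical γ}

/-!
`B(γ)` is generated by a term algebra living in `Type`, so it is a set of ordinals and has a
least non-member `ψ(γ) ∉ B(γ)`. Since `B` is monotone, `ψ(γ) ∈ B(η)` with `η ≤ γ` would put
`ψ(γ)` into `B(γ)`; hence `γ < η`, and then `γ ∈ B(γ) ⊆ B(η)`. Conversely `B(η)` is closed
under `ψ` below `η`.
-/

inductive ClosBTerm (θ : Ordinal.{0}) : Type
  | zero : ClosBTerm θ
  | omega : ClosBTerm θ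
  | gamma (i : (θ + 1).ToType) : ClosBTerm θ
  | add (a b : ClosBTerm θ) : ClosBTerm θ
  | veblen (a b : ClosBTerm θ) : ClosBTerm θ
  | collapse (a : ClosBTerm θ) : ClosBTerm θ

noncomputable def ClosBTerm.eval {θ α : Ordinal} (f : ∀ ξ, ξ < α → Ordinal) :
    ClosBTerm θ → Ordinal
  | .zero => 0
  | .omega => OmegaB θ
  | .gamma i => Gamma ((ToType.mk (o := θ + 1)).symm i : Ordinal)
  | .add a b => a.eval f + b.eval f
  | .veblen a b => _root_.veblen (a.eval f) (b.eval f)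
  | .collapse a => if h : a.eval f < α then f _ h else 0

theorem closB_subset_range_eval (θ α : Ordinal) (f : ∀ ξ, ξ < α → Ordinal) :
    closB θ α f ⊆ Set.range (ClosBTerm.eval (θ := θ) f) := by
  intro a ha
  refine ha _ ⟨⟨.zero, rfl⟩, ⟨.omega, rfl⟩, fun β hβ => ?_, ?_, ?_, ?_⟩
  · refine ⟨.gamma (ToType.mk ⟨β, hβ.trans_lt (lt_add_one θ)⟩), ?_⟩
    simp [ClosBTerm.eval]
  · rintro _ ⟨a, rfl⟩ _ ⟨b, rfl⟩
    exact ⟨.add a b, rfl⟩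
  · rintro _ ⟨a, rfl⟩ _ ⟨b, rfl⟩
    exact ⟨.veblen a b, rfl⟩
  · rintro ξ h ⟨a, rfl⟩
    exact ⟨.collapse a, by simp [ClosBTerm.eval, h]⟩

theorem bddAbove_closB (θ α : Ordinal) (f : ∀ ξ, ξ < α → Ordinal) :
    BddAbove (closB θ α f) :=
  bddAbove_of_small.mono (closB_subset_range_eval θ α f)

theorem psiB_eq_sInf (θ γ : Ordinal) : psiB θ γ = sInf {β | β ∉ BB θ γ} := by
  rw [psiB, WellFounded.fix_eq]
  rfl

theorem psiB_notMem_BB (θ γ : Ordinal) : psiB θ γ ∉ BB θ γ := by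
  obtain ⟨b, hb⟩ := bddAbove_closB θ γ (fun ξ _ => psiB θ ξ)
  have hne : {β | β ∉ BB θ γ}.Nonempty :=
    ⟨b + 1, fun h => (lt_add_one b).not_ge (hb h)⟩
  rw [psiB_eq_sInf]
  exact csInf_mem hne

theorem BB_mono {θ δ δ' : Ordinal} (h : δ ≤ δ') : BB θ δ ⊆ BB θ δ' :=
  fun _ ha S hS => ha S ⟨hS.1, hS.2.1, hS.2.2.1, hS.2.2.2.1, hS.2.2.2.2.1,
    fun ξ hξ => hS.2.2.2.2.2 ξ (hξ.trans_le h)⟩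

theorem psiB_mem_BB {θ η ξ : Ordinal} (h : ξ < η) (hξ : ξ ∈ BB θ η) : psiB θ ξ ∈ BB θ η :=
  fun S hS => hS.2.2.2.2.2 ξ h (hξ S hS)

theorem stmt18 (θ η α γ : Ordinal) (hγ : γ ∈ BB θ γ) (hα : α = psiB θ γ) :
    α ∈ BB θ η ↔ γ ∈ BB θ η ∧ γ < η := by
  subst hα
  refine ⟨fun hψ => ?_, fun ⟨hγη, hlt⟩ => psiB_mem_BB hlt hγη⟩
  have hlt : γ < η := lt_of_not_ge fun hle => psiB_notMem_BB θ γ (BB_mono hle hψ)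
  exact ⟨BB_mono hlt.le hγ, hlt⟩
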